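/- Let G be a graph and p a pendant vertex of G with neighbor v. If there exists a maximum double neighborhood sequence of G − p avoiding v, then ρ(G) = ρ(G − p) + 2; otherwise ρ(G) = ρ(G − p) + 1, where ρ denotes the maximum length of a double neighborhood sequence. -/

import Mathlib

/-!
Deleting `p` and `v` from a DNS of `G` leaves a DNS of `G − p` that avoids `v`: deleting
vertices only lowers the domination counts, and a vertex other than `p` and `v` does not
dominate `p`, so its witness survives in `G − p`. Hence `ρ(G) ≤ ρ(G − p) + 2`, and equality forces
a maximum DNS of `G − p` avoiding `v`. Conversely, `p` is dominated only by `p` and `v`, so a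
DNS of `G − p` can be followed by `p`, and one avoiding `v` by `v` and then `p`.
-/

open SimpleGraph

variable {V : Type*}

/-- The closed neighborhood of a vertex. -/
def cnbr (G : SimpleGraph V) (v : V) : Set V := insert v (G.neighborSet v)

/-- The number of vertices in the list `l` that dominate `u` (i.e. whose closed
neighborhood contains `u`). -/
noncomputable def domCount (G : SimpleGraph V) (u : V) (l : List V) : ℕ :=
  {w | w ∈ l ∧ u ∈ cnbr G w}.ncard

/-- A double neighborhood sequence (DNS): a sequence of distinct vertices in which each
vertex dominates some vertex dominated at most once by its predecessors. -/
def IsDNS (G : SimpleGraph V) (l : List V) : Prop :=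
  l.Nodup ∧ ∀ i : Fin l.length, ∃ u ∈ cnbr G (l.get i), domCount G u (l.take i) ≤ 1

/-- A double dominating sequence (DDS): a DNS whose underlying set is doubly dominating. -/
def IsDDS (G : SimpleGraph V) (l : List V) : Prop :=
  IsDNS G l ∧ ∀ v, 2 ≤ domCount G v l

/-- The Grundy double domination number: maximum length of a DDS. -/
noncomputable def gddn (G : SimpleGraph V) : ℕ :=
  sSup {n | ∃ l : List V, IsDDS G l ∧ l.length = n}

/-- The maximum double neighborhood number: maximum length of a DNS. -/
noncomputable def mdnn (G : SimpleGraph V) : ℕ :=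
  sSup {n | ∃ l : List V, IsDNS G l ∧ l.length = n}

/-- A legal (Grundy domination) sequence. -/
def IsLegal (G : SimpleGraph V) (l : List V) : Prop :=
  l.Nodup ∧ ∀ i : Fin l.length, ∃ u ∈ cnbr G (l.get i), domCount G u (l.take i) = 0

/-- A dominating sequence: legal sequence whose underlying set dominates. -/
def IsDomSeq (G : SimpleGraph V) (l : List V) : Prop :=
  IsLegal G l ∧ ∀ v, 1 ≤ domCount G v l

/-- The Grundy domination number: maximum length of a dominating sequence. -/
noncomputable def grundy (G : SimpleGraph V) : ℕ :=
  sSup {n | ∃ l : List V, IsDomSeq G l ∧ l.length = n}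

/-- The double domination number: minimum size of a double dominating set. -/
noncomputable def ddomNum (G : SimpleGraph V) : ℕ :=
  sInf {n | ∃ D : Set V, (∀ v, 2 ≤ {w | w ∈ D ∧ v ∈ cnbr G w}.ncard) ∧ D.ncard = n}

section DNS

variable {G : SimpleGraph V}

lemma mem_cnbr {w u : V} : u ∈ cnbr G w ↔ u = w ∨ G.Adj w u := Set.mem_insert_iff

lemma domCount_mono (u : V) {l₁ l₂ : List V} (h : ∀ x ∈ l₁, x ∈ l₂) :
    domCount G u l₁ ≤ domCount G u l₂ :=
  Set.ncard_le_ncard (fun x hx => ⟨h x hx.1, hx.2⟩)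
    ((List.finite_toSet l₂).subset fun _ hx => hx.1)

lemma isDNS_nil (G : SimpleGraph V) : IsDNS G [] := ⟨List.nodup_nil, fun i => i.elim0⟩

lemma isDNS_append_singleton {l : List V} {a : V} :
    IsDNS G (l ++ [a]) ↔ IsDNS G l ∧ a ∉ l ∧ ∃ u ∈ cnbr G a, domCount G u l ≤ 1 := by
  have hprefix (i : ℕ) (hi : i < l.length) :
      (l ++ [a])[i]'(by simp; omega) = l[i] ∧ (l ++ [a]).take i = l.take i :=
    ⟨List.getElem_append_left hi, List.take_append_of_le_length hi.le⟩
  have hlast : (l ++ [a])[l.length] = a ∧ (l ++ [a]).take l.length = l := by simp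
  rw [IsDNS, IsDNS, ← List.concat_eq_append, List.nodup_concat, List.concat_eq_append]
  constructor
  · rintro ⟨⟨ha, hnd⟩, h⟩
    refine ⟨⟨hnd, fun i => ?_⟩, ha, ?_⟩
    · simpa [hprefix i i.isLt] using h ⟨i, by simp⟩
    · simpa [hlast] using h ⟨l.length, by simp⟩
  · rintro ⟨⟨hnd, h⟩, ha, hlast_dom⟩
    refine ⟨⟨ha, hnd⟩, fun ⟨i, hi⟩ => ?_⟩
    obtain hi | rfl : i < l.length ∨ i = l.length := by simp at hi; omega
    · simpa [hprefix i hi] using h ⟨i, hi⟩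
    · simpa [hlast] using hlast_dom

lemma IsDNS.filter {l : List V} (h : IsDNS G l) (q : V → Bool) : IsDNS G (l.filter q) := by
  induction l using List.reverseRecOn with
  | nil => exact isDNS_nil G
  | append_singleton l a ih =>
    obtain ⟨hl, ha, u, hu, hcount⟩ := isDNS_append_singleton.1 h
    rw [List.filter_append]
    by_cases hqa : q a
    · rw [List.filter_singleton, hqa, cond_true, isDNS_append_singleton]
      exact ⟨ih hl, fun hmem => ha (List.mem_of_mem_filter hmem), u, hu,
        (domCount_mono u fun _ => List.mem_of_mem_filter).trans hcount⟩
    · simpa [hqa] using ih hl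

end DNS

section MaxLength

variable {G : SimpleGraph V}

lemma mdnn_le {n : ℕ} (h : ∀ l : List V, IsDNS G l → l.length ≤ n) : mdnn G ≤ n :=
  csSup_le ⟨0, [], isDNS_nil G, rfl⟩ (by rintro _ ⟨l, hl, rfl⟩; exact h l hl)

variable [Finite V]

lemma bddAbove_isDNS_lengths (G : SimpleGraph V) :
    BddAbove {n | ∃ l : List V, IsDNS G l ∧ l.length = n} := by
  have := Fintype.ofFinite V
  exact ⟨Fintype.card V, by rintro n ⟨l, hl, rfl⟩; exact hl.1.length_le_card⟩

lemma exists_isDNS_length_eq_mdnn (G : SimpleGraph V) :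
    ∃ l : List V, IsDNS G l ∧ l.length = mdnn G :=
  Nat.sSup_mem (s := {n | ∃ l : List V, IsDNS G l ∧ l.length = n}) ⟨0, [], isDNS_nil G, rfl⟩
    (bddAbove_isDNS_lengths G)

lemma IsDNS.length_le_mdnn {l : List V} (h : IsDNS G l) : l.length ≤ mdnn G :=
  le_csSup (bddAbove_isDNS_lengths G) ⟨l, h, rfl⟩

end MaxLength

section Induce

variable {G : SimpleGraph V} {s : Set V}

lemma mem_cnbr_induce {a b : s} : b ∈ cnbr (G.induce s) a ↔ (b : V) ∈ cnbr G a := by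
  simp [mem_cnbr, Subtype.ext_iff]

lemma domCount_induce (u : s) (l : List s) :
    domCount (G.induce s) u l = domCount G u (l.map Subtype.val) := by
  have : {w | w ∈ l.map Subtype.val ∧ (u : V) ∈ cnbr G w} =
      Subtype.val '' {w | w ∈ l ∧ u ∈ cnbr (G.induce s) w} := by
    ext x
    simp [mem_cnbr_induce]
  rw [domCount, domCount, this, Set.ncard_image_of_injective _ Subtype.val_injective]

lemma IsDNS.map_subtype_val {l : List s} (h : IsDNS (G.induce s) l) :
    IsDNS G (l.map Subtype.val) := by
  induction l using List.reverseRecOn with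
  | nil => exact isDNS_nil G
  | append_singleton l a ih =>
    obtain ⟨hl, ha, u, hu, hcount⟩ := isDNS_append_singleton.1 h
    rw [List.map_append, List.map_singleton, isDNS_append_singleton]
    exact ⟨ih hl, by simpa using ha, u, mem_cnbr_induce.1 hu, domCount_induce u l ▸ hcount⟩

lemma IsDNS.of_map_subtype_val {l : List s} (h : IsDNS G (l.map Subtype.val))
    (hs : ∀ x ∈ l, cnbr G x ⊆ s) : IsDNS (G.induce s) l := by
  induction l using List.reverseRecOn with
  | nil => exact isDNS_nil _
  | append_singleton l a ih =>
    rw [List.map_append, List.map_singleton, isDNS_append_singleton] at h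
    obtain ⟨hl, ha, u, hu, hcount⟩ := h
    rw [isDNS_append_singleton]
    refine ⟨ih hl fun x hx => hs x (by simp [hx]), fun hmem => ha (List.mem_map_of_mem hmem),
      ⟨u, hs a (by simp) hu⟩, mem_cnbr_induce.2 hu, ?_⟩
    rwa [domCount_induce]

end Induce

section Pendant

variable {G : SimpleGraph V} {p v : V}

lemma domCount_pendant_le_one (huniq : ∀ w, G.Adj p w → w = v) {l : List V} (hp : p ∉ l) :
    domCount G p l ≤ 1 := by
  have hsub : {w | w ∈ l ∧ p ∈ cnbr G w} ⊆ {v} := by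
    rintro w ⟨hw, hpw⟩
    rcases mem_cnbr.1 hpw with rfl | hadj
    · exact absurd hw hp
    · exact huniq w hadj.symm
  exact (Set.ncard_le_ncard hsub).trans (Set.ncard_singleton v).le

lemma IsDNS.exists_isDNS_induce_ne_length_le (huniq : ∀ w, G.Adj p w → w = v) {l : List V}
    (h : IsDNS G l) :
    ∃ m : List ({u : V | u ≠ p} : Set V), IsDNS (G.induce {u : V | u ≠ p}) m ∧
      (∀ x ∈ m, (x : V) ≠ v) ∧ l.length ≤ m.length + 2 := by
  classical
  set q : V → Bool := fun x => x ≠ p ∧ x ≠ v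
  have hq : ∀ x ∈ l.filter q, x ≠ p ∧ x ≠ v := fun x hx => by simpa [q] using List.of_mem_filter hx
  lift l.filter q to List ({u : V | u ≠ p} : Set V) using fun x hx => (hq x hx).1 with m hm
  have hm_ne : ∀ x ∈ m, (x : V) ≠ p ∧ (x : V) ≠ v := fun x hx => hq x (List.mem_map_of_mem hx)
  have hcnbr : ∀ x ∈ m, cnbr G x ⊆ {u : V | u ≠ p} := by
    intro x hx y hy
    rcases mem_cnbr.1 hy with rfl | hadj
    · exact (hm_ne x hx).1
    · rintro rfl
      exact (hm_ne x hx).2 (huniq x hadj.symm)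
  have hrest : (l.filter fun x => !q x).length ≤ 2 := by
    refine ((h.1.filter _).subperm (l₂ := [p, v]) fun x hx => ?_).length_le
    have := List.of_mem_filter hx
    simp only [q, Bool.not_eq_eq_eq_not, Bool.not_true, decide_eq_false_iff_not] at this
    simp only [List.mem_cons, List.not_mem_nil, or_false]
    tauto
  have hsplit := List.length_eq_length_filter_add q (l := l)
  rw [← hm, List.length_map] at hsplit
  exact ⟨m, (hm ▸ h.filter q).of_map_subtype_val hcnbr, fun x hx => (hm_ne x hx).2, by omega⟩

lemma IsDNS.map_subtype_val_append_pendant (huniq : ∀ w, G.Adj p w → w = v)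
    {m : List ({u : V | u ≠ p} : Set V)} (hm : IsDNS (G.induce {u : V | u ≠ p}) m) :
    IsDNS G (m.map Subtype.val ++ [p]) := by
  have hp : p ∉ m.map Subtype.val := fun hmem => by
    obtain ⟨x, -, hx⟩ := List.mem_map.1 hmem
    exact x.2 hx
  exact isDNS_append_singleton.2
    ⟨hm.map_subtype_val, hp, p, mem_cnbr.2 (.inl rfl), domCount_pendant_le_one huniq hp⟩

lemma IsDNS.map_subtype_val_append_neighbor_pendant (hpv : G.Adj p v)
    (huniq : ∀ w, G.Adj p w → w = v) {m : List ({u : V | u ≠ p} : Set V)}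
    (hm : IsDNS (G.induce {u : V | u ≠ p}) m) (hv : ∀ x ∈ m, (x : V) ≠ v) :
    IsDNS G (m.map Subtype.val ++ [v] ++ [p]) := by
  have hp : p ∉ m.map Subtype.val ++ [v] := by
    simp only [List.mem_append, List.mem_map, List.mem_singleton, not_or, not_exists, not_and]
    exact ⟨fun x _ hx => x.2 hx, hpv.ne⟩
  have hv' : v ∉ m.map Subtype.val := by
    simpa only [List.mem_map, not_exists, not_and] using fun x hx hxv => hv x hx hxv
  refine isDNS_append_singleton.2 ⟨isDNS_append_singleton.2 ⟨hm.map_subtype_val, hv', p,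
    mem_cnbr.2 (.inr hpv.symm), ?_⟩, hp, p, mem_cnbr.2 (.inl rfl), domCount_pendant_le_one huniq hp⟩
  exact domCount_pendant_le_one huniq fun h => hp (List.mem_append_left _ h)

end Pendant

/-- removal of a pendant vertex p with neighbor v: ρ(G) = ρ(G−p) + 2 if some
MDNS of G−p avoids v, and ρ(G) = ρ(G−p) + 1 otherwise. -/
theorem stmt8 [Fintype V] (G : SimpleGraph V) (p v : V)
    (hpv : G.Adj p v) (huniq : ∀ w, G.Adj p w → w = v) :
    ((∃ l : List ({u : V | u ≠ p} : Set V), IsDNS (G.induce {u : V | u ≠ p}) l ∧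
        l.length = mdnn (G.induce {u : V | u ≠ p}) ∧ ∀ x ∈ l, (x : V) ≠ v) →
      mdnn G = mdnn (G.induce {u : V | u ≠ p}) + 2) ∧
    ((¬ ∃ l : List ({u : V | u ≠ p} : Set V), IsDNS (G.induce {u : V | u ≠ p}) l ∧
        l.length = mdnn (G.induce {u : V | u ≠ p}) ∧ ∀ x ∈ l, (x : V) ≠ v) →
      mdnn G = mdnn (G.induce {u : V | u ≠ p}) + 1) := by
  constructor
  · rintro ⟨m, hm, hlen, hv⟩
    refine le_antisymm (mdnn_le fun l hl => ?_) ?_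
    · obtain ⟨m', hm', -, hl'⟩ := hl.exists_isDNS_induce_ne_length_le huniq
      have := hm'.length_le_mdnn
      omega
    · have := (hm.map_subtype_val_append_neighbor_pendant hpv huniq hv).length_le_mdnn
      simp only [List.length_append, List.length_map, List.length_singleton] at this
      omega
  · intro hno
    refine le_antisymm (mdnn_le fun l hl => ?_) ?_
    · obtain ⟨m', hm', hv', hl'⟩ := hl.exists_isDNS_induce_ne_length_le huniq
      have := hm'.length_le_mdnn
      by_contra!
      exact hno ⟨m', hm', by omega, hv'⟩
    · obtain ⟨m, hm, hlen⟩ := exists_isDNS_length_eq_mdnn (G.induce {u : V | u ≠ p})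
      have := (hm.map_subtype_val_append_pendant huniq).length_le_mdnn
      simp only [List.length_append, List.length_map, List.length_singleton] at this
      omega
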